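/- arXiv:1010.4760 — 2 statements merged into one kernel-verified Lean document; each statement's English description precedes it below -/
import Mathlib

section
/- In any deterministic labelled transition system, if (r,s) →^u (r',s') and u is an offending prefix for (r,s), then Off(r',s') = u\Off(r,s), where u\L denotes the left quotient of L by u. -/
/-
Determinism makes `u` lead to a unique state, so the traces of `r'` and `s'` are the left quotients
`(u ++ ·) ⁻¹' L` of those of `r` and `s`, and hence so is their symmetric difference. Taking
shortest words commutes with this quotient as soon as some shortest word `u ++ v₀` of the original
language extends `u`: a shortest word `v` of the quotient is no longer than `v₀`, so `u ++ v` is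
no longer than `u ++ v₀` and hence shortest in the original language.
-/

namespace FOGPaper

variable {S A : Type*}

/-- Extension of the single-step transition relations to words. -/
def Steps (tr : A → S → S → Prop) : List A → S → S → Prop
  | [], s, t => t = s
  | a :: w, s, t => ∃ s', tr a s s' ∧ Steps tr w s' t

/-- The trace set of a state: the finite words it enables. -/
def traces (tr : A → S → S → Prop) (s : S) : Set (List A) :=
  {w | ∃ t, Steps tr w s t}

/-- The traces of length at most `k`. -/
def tracesLe (tr : A → S → S → Prop) (k : ℕ) (s : S) : Set (List A) :=
  {w ∈ traces tr s | w.length ≤ k}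

/-- `r ∼ₖ s` : `r` and `s` enable the same words of length at most `k`. -/
def SimK (tr : A → S → S → Prop) (k : ℕ) (r s : S) : Prop :=
  tracesLe tr k r = tracesLe tr k s

/-- `r ∼ s` : trace equivalence. -/
def Sim (tr : A → S → S → Prop) (r s : S) : Prop :=
  traces tr r = traces tr s

/-- The equivalence level in ℕ ∪ {ω}: the supremum of the `k` with `r ∼ₖ s`
(equal to `k` iff `r ∼ₖ s` and not `r ∼ₖ₊₁ s`, and to `ω = ⊤` iff `r ∼ s`). -/
noncomputable def eqLevel (tr : A → S → S → Prop) (r s : S) : ℕ∞ :=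
  ⨆ k ∈ {k : ℕ | SimK tr k r s}, (k : ℕ∞)

/-- The offending words for `(r,s)` : the shortest words lying in exactly one of
`traces r`, `traces s`. -/
def offWords (tr : A → S → S → Prop) (r s : S) : Set (List A) :=
  {w | w ∈ (traces tr r \ traces tr s) ∪ (traces tr s \ traces tr r) ∧
       ∀ v ∈ (traces tr r \ traces tr s) ∪ (traces tr s \ traces tr r),
         w.length ≤ v.length}

/-- A labelled transition system is deterministic if each `→ᵃ` is a partial function. -/
def IsDet (tr : A → S → S → Prop) : Prop :=
  ∀ a r s₁ s₂, tr a r s₁ → tr a r s₂ → s₁ = s₂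

/-- The infinite traces (ω-words enabled in a state). -/
def omTraces (tr : A → S → S → Prop) (s : S) : Set (ℕ → A) :=
  {α | ∃ f : ℕ → S, f 0 = s ∧ ∀ i, tr (α i) (f i) (f (i + 1))}

/-- Concatenation of a finite word with an infinite word. -/
def wApp (u : List A) (α : ℕ → A) : ℕ → A := fun i =>
  if h : i < u.length then u[i]'h else α (i - u.length)

open scoped symmDiff

def shortest (L : Set (List A)) : Set (List A) :=
  {w | w ∈ L ∧ ∀ v ∈ L, w.length ≤ v.length}

theorem shortest_preimage_append {L : Set (List A)} {u w : List A} (hw : w ∈ shortest L)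
    (hu : u <+: w) : shortest ((u ++ ·) ⁻¹' L) = (u ++ ·) ⁻¹' shortest L := by
  obtain ⟨v₀, rfl⟩ := hu
  obtain ⟨hv₀, hv₀_min⟩ := hw
  ext v
  simp only [shortest, Set.mem_preimage]
  refine and_congr_right fun _ => ⟨fun hv_min y hy => ?_, fun hv_min x hx => ?_⟩
  · calc (u ++ v).length ≤ (u ++ v₀).length := by simpa using hv_min v₀ hv₀
      _ ≤ y.length := hv₀_min y hy
  · simpa using hv_min (u ++ x) hx

theorem offWords_eq_shortest (tr : A → S → S → Prop) (r s : S) :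
    offWords tr r s = shortest (traces tr r ∆ traces tr s) :=
  rfl

theorem steps_append {tr : A → S → S → Prop} (u v : List A) (r t : S) :
    Steps tr (u ++ v) r t ↔ ∃ m, Steps tr u r m ∧ Steps tr v m t := by
  induction u generalizing r with
  | nil => simp [Steps]
  | cons a u ih =>
    simp only [List.cons_append, Steps, ih]
    grind

namespace IsDet

variable {tr : A → S → S → Prop}

theorem steps_eq (hdet : IsDet tr) {u : List A} {r t₁ t₂ : S}
    (h₁ : Steps tr u r t₁) (h₂ : Steps tr u r t₂) : t₁ = t₂ := by
  induction u generalizing r with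
  | nil => exact h₁.trans h₂.symm
  | cons a u ih =>
    obtain ⟨r₁, hr₁, h₁⟩ := h₁
    obtain ⟨r₂, hr₂, h₂⟩ := h₂
    cases hdet a r r₁ r₂ hr₁ hr₂
    exact ih h₁ h₂

theorem traces_eq_preimage_append (hdet : IsDet tr) {u : List A} {r r' : S}
    (hr : Steps tr u r r') : traces tr r' = (u ++ ·) ⁻¹' traces tr r := by
  ext v
  simp only [traces, Set.mem_preimage, Set.mem_ofPred_eq, steps_append]
  constructor
  · rintro ⟨t, ht⟩
    exact ⟨t, r', hr, ht⟩
  · rintro ⟨t, m, hm, ht⟩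
    exact ⟨t, hdet.steps_eq hr hm ▸ ht⟩

end IsDet

/-- in a deterministic LTS, if `(r,s) →ᵘ (r',s')` and `u` is an
offending prefix for `(r,s)`, then `Off(r',s')` is the left quotient of `Off(r,s)` by `u`. -/
theorem offWords_quotient {S A : Type*} (tr : A → S → S → Prop)
    (hdet : IsDet tr) (u : List A) (r s r' s' : S)
    (hr : Steps tr u r r') (hs : Steps tr u s s')
    (hoff : ∃ w ∈ offWords tr r s, u <+: w) :
    offWords tr r' s' = {v | u ++ v ∈ offWords tr r s} := by
  obtain ⟨w, hw, hu⟩ := hoff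
  rw [offWords_eq_shortest, hdet.traces_eq_preimage_append hr,
    hdet.traces_eq_preimage_append hs, ← Set.preimage_symmDiff]
  exact shortest_preimage_append hw hu

end FOGPaper
end

section
/- For any first-order grammar G and regular term E = E(x₁): if there is no u ∈ A* with E →^u x₁ in L_G, then E(T) ∼ E(T') for all ground regular terms T, T'. -/
namespace FOGPaper

variable {S A : Type*}

/-- Possibly-infinite terms over nonterminals `N` (and variables `x₁, x₂, …`),
represented as partial labelling functions on positions (`Sum.inr i` is the
variable `xᵢ`). -/
abbrev Tm (N : Type*) := List ℕ → Option (N ⊕ ℕ)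

/-- Arity of a label: nonterminals have their arity, variables have arity 0. -/
def arityOf {N : Type*} (arity : N → ℕ) : N ⊕ ℕ → ℕ
  | Sum.inl X => arity X
  | Sum.inr _ => 0

/-- Well-formed term: the domain is nonempty (contains the root) and matches the
arities of the labels (which makes it prefix-closed). -/
def TmWF {N : Type*} (arity : N → ℕ) (E : Tm N) : Prop :=
  (E []).isSome ∧
    ∀ γ i, (E (γ ++ [i])).isSome ↔ ∃ v, E γ = some v ∧ 1 ≤ i ∧ i ≤ arityOf arity v

/-- The subterm (occurrence) of `E` at position `γ`. -/
def subAt {N : Type*} (E : Tm N) (γ : List ℕ) : Tm N := fun δ => E (γ ++ δ)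

/-- A term is regular if it has only finitely many subterms. -/
def TmRegular {N : Type*} (E : Tm N) : Prop := (Set.range (subAt E)).Finite

/-- A term is finite if its domain is finite. -/
def TmFinite {N : Type*} (E : Tm N) : Prop := {γ | (E γ).isSome}.Finite

/-- A term is ground if no variable occurs in it. -/
def TmGround {N : Type*} (E : Tm N) : Prop := ∀ γ i, E γ ≠ some (Sum.inr i)

/-- `E = E(x₁,…,xₙ)` : all variables occurring in `E` are among `x₁,…,xₙ`. -/
def VarsBdd {N : Type*} (n : ℕ) (E : Tm N) : Prop :=
  ∀ γ i, E γ = some (Sum.inr i) → 1 ≤ i ∧ i ≤ n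

/-- The term consisting of the single variable `xᵢ`. -/
def varTm (N : Type*) (i : ℕ) : Tm N := fun γ => if γ = [] then some (Sum.inr i) else none

open Classical in
/-- Substitution `E σ`: each occurrence of the variable `xᵢ` is replaced by `σ i`.
(For a well-formed `E`, the decomposition of a position through a variable
occurrence is unique, so the choice is canonical.) -/
noncomputable def subst {N : Type*} (E : Tm N) (σ : ℕ → Tm N) : Tm N := fun γ =>
  if h : ∃ p : List ℕ × ℕ × List ℕ, γ = p.1 ++ p.2.2 ∧ E p.1 = some (Sum.inr p.2.1)
  then σ h.choose.2.1 h.choose.2.2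
  else E γ

/-- The term `X G₁ G₂ …` with root `X` and `i`-th child `Gs i`. -/
def node {N : Type*} (X : N) (Gs : ℕ → Tm N) : Tm N := fun γ =>
  match γ with
  | [] => some (Sum.inl X)
  | i :: δ => Gs i δ

/-- A first-order grammar: ranked nonterminals and a finite set of root-rewriting
rules `X x₁ … xₘ →ᵃ E` where `E` is a finite term with variables among `x₁,…,xₘ`,
`m = arity X`. -/
structure FOG (N A : Type*) where
  arity : N → ℕ
  rules : Set (N × A × Tm N)
  rules_fin : rules.Finite
  rules_wf : ∀ r ∈ rules, TmFinite r.2.2 ∧ TmWF arity r.2.2 ∧ VarsBdd (arity r.1) r.2.2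

/-- A grammar is deterministic: at most one rule for each pair `(X, a)`. -/
def FOG.Det {N A : Type*} (G : FOG N A) : Prop :=
  ∀ X a E E', (X, a, E) ∈ G.rules → (X, a, E') ∈ G.rules → E = E'

/-- The transition relation of the LTS `L_G` generated by the grammar `G` on terms:
each rule `X x₁ … xₘ →ᵃ E` gives `X G₁ … Gₘ →ᵃ E(G₁,…,Gₘ)`. -/
def gstep {N A : Type*} (G : FOG N A) (a : A) (s t : Tm N) : Prop :=
  ∃ X E Gs, (X, a, E) ∈ G.rules ∧ s = node X Gs ∧ t = subst E Gs


/-! A step of `E σ` fires a rule at the root of `E σ`. As long as no variable ever surfaces at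
the root of a term reachable from `E`, that root is a nonterminal of `E` itself, so every step
of `E σ` is the `σ`-image of a step of `E`, and conversely. Hence `E σ` and `E σ'` enable the
same words, whatever `σ` and `σ'` are. -/

section Steps

variable {tr : A → S → S → Prop}

lemma Steps.preserves {P : S → Prop} (hP : ∀ a s t, tr a s t → P s → P t) :
    ∀ {w : List A} {s t : S}, Steps tr w s t → P s → P t
  | [], _, _, rfl, hs => hs
  | a :: _, _, _, ⟨_, hstep, hrest⟩, hs => Steps.preserves hP hrest (hP a _ _ hstep hs)

end Steps

section Terms

variable {N : Type*} {ar : N → ℕ} {E : Tm N}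

lemma TmWF.isSome_of_append (h : TmWF ar E) {γ : List ℕ} (δ : List ℕ)
    (hs : (E (γ ++ δ)).isSome) : (E γ).isSome := by
  induction δ using List.reverseRecOn with
  | nil => simpa using hs
  | append_singleton δ k ih =>
    rw [← List.append_assoc] at hs
    obtain ⟨v, hv, -⟩ := (h.2 (γ ++ δ) k).1 hs
    exact ih (by rw [hv]; rfl)

lemma TmWF.append_eq_none_of_var (h : TmWF ar E) {γ δ : List ℕ} {i : ℕ}
    (hv : E γ = some (Sum.inr i)) (hδ : δ ≠ []) : E (γ ++ δ) = none := by
  obtain ⟨k, δ, rfl⟩ := List.exists_cons_of_ne_nil hδ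
  rw [← Option.not_isSome_iff_eq_none]
  intro hs
  rw [← List.singleton_append, ← List.append_assoc] at hs
  obtain ⟨v, hv', hk₁, hk⟩ := (h.2 γ k).1 (h.isSome_of_append δ hs)
  rw [hv] at hv'
  cases hv'
  simp only [arityOf] at hk
  omega

lemma TmWF.eq_of_prefix_of_var (h : TmWF ar E) {γ₁ γ₂ : List ℕ} {i₁ i₂ : ℕ}
    (hp : γ₁ <+: γ₂) (h₁ : E γ₁ = some (Sum.inr i₁)) (h₂ : E γ₂ = some (Sum.inr i₂)) :
    γ₁ = γ₂ := by
  obtain ⟨e, rfl⟩ := hp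
  rcases eq_or_ne e [] with rfl | he
  · simp
  · simp [h.append_eq_none_of_var h₁ he] at h₂

lemma TmWF.var_pos_unique (h : TmWF ar E) {γ₁ γ₂ δ₁ δ₂ : List ℕ} {i₁ i₂ : ℕ}
    (heq : γ₁ ++ δ₁ = γ₂ ++ δ₂) (h₁ : E γ₁ = some (Sum.inr i₁))
    (h₂ : E γ₂ = some (Sum.inr i₂)) : γ₁ = γ₂ := by
  rcases List.prefix_or_prefix_of_prefix ⟨δ₁, heq⟩ ⟨δ₂, rfl⟩ with hp | hp
  · exact h.eq_of_prefix_of_var hp h₁ h₂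
  · exact (h.eq_of_prefix_of_var hp h₂ h₁).symm

lemma TmWF.subAt_of_isSome (h : TmWF ar E) {γ : List ℕ} (hs : (E γ).isSome) :
    TmWF ar (subAt E γ) :=
  ⟨by simpa [FOGPaper.subAt] using hs,
    fun γ' i => by simpa [FOGPaper.subAt, List.append_assoc] using h.2 (γ ++ γ') i⟩

lemma TmWF.subAt_child (h : TmWF ar E) {X : N} (hX : E [] = some (Sum.inl X)) {i : ℕ}
    (h1 : 1 ≤ i) (hi : i ≤ ar X) : TmWF ar (subAt E [i]) :=
  h.subAt_of_isSome ((h.2 [] i).2 ⟨_, hX, h1, hi⟩)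

lemma TmWF.eq_varTm (h : TmWF ar E) {i : ℕ} (hv : E [] = some (Sum.inr i)) :
    E = varTm N i := by
  funext γ
  rcases eq_or_ne γ [] with rfl | hγ
  · simp [varTm, hv]
  · simpa [varTm, hγ] using h.append_eq_none_of_var hv hγ

lemma TmWF.exists_root_inl (h : TmWF ar E) (hE : ∀ i, E [] ≠ some (Sum.inr i)) :
    ∃ X, E [] = some (Sum.inl X) := by
  obtain ⟨v | i, hv⟩ := Option.isSome_iff_exists.1 h.1
  · exact ⟨v, hv⟩
  · exact absurd hv (hE i)

lemma subst_append_of_var (h : TmWF ar E) {γ : List ℕ} {i : ℕ}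
    (hv : E γ = some (Sum.inr i)) (σ : ℕ → Tm N) (δ : List ℕ) :
    subst E σ (γ ++ δ) = σ i δ := by
  have hex : ∃ p : List ℕ × ℕ × List ℕ,
      γ ++ δ = p.1 ++ p.2.2 ∧ E p.1 = some (Sum.inr p.2.1) := ⟨(γ, i, δ), rfl, hv⟩
  rw [subst, dif_pos hex]
  obtain ⟨hc₁, hc₂⟩ := hex.choose_spec
  have hγ : hex.choose.1 = γ := h.var_pos_unique hc₁.symm hc₂ hv
  rw [hγ, hv] at hc₂
  rw [hγ] at hc₁
  rw [← Sum.inr.inj (Option.some.inj hc₂), ← List.append_cancel_left hc₁]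

lemma subst_of_var (h : TmWF ar E) {γ : List ℕ} {i : ℕ} (hv : E γ = some (Sum.inr i))
    (σ : ℕ → Tm N) : subst E σ γ = σ i [] := by
  simpa using subst_append_of_var h hv σ []

lemma subst_of_not_below_var (σ : ℕ → Tm N) {γ : List ℕ}
    (hγ : ∀ γ₁ i δ, γ = γ₁ ++ δ → E γ₁ ≠ some (Sum.inr i)) : subst E σ γ = E γ := by
  rw [subst, dif_neg]
  rintro ⟨p, hp₁, hp₂⟩
  exact hγ p.1 p.2.1 p.2.2 hp₁ hp₂

lemma exists_var_of_subst_eq_var {σ : ℕ → Tm N} {γ : List ℕ} {j : ℕ}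
    (hv : subst E σ γ = some (Sum.inr j)) :
    ∃ γ₁ i δ, γ = γ₁ ++ δ ∧ E γ₁ = some (Sum.inr i) ∧ σ i δ = some (Sum.inr j) := by
  rw [subst] at hv
  split at hv
  · next hex => exact ⟨_, _, _, hex.choose_spec.1, hex.choose_spec.2, hv⟩
  · next hex => exact absurd ⟨(γ, j, []), by simp, hv⟩ hex

lemma subst_root (σ : ℕ → Tm N) {X : N} (hX : E [] = some (Sum.inl X)) :
    subst E σ [] = some (Sum.inl X) := by
  rw [subst_of_not_below_var σ, hX]
  intro γ₁ i δ hγ hv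
  rw [(List.append_eq_nil_iff.1 hγ.symm).1, hX] at hv
  cases hv

lemma VarsBdd.subst {n : ℕ} {σ : ℕ → Tm N}
    (hσ : ∀ γ i, E γ = some (Sum.inr i) → VarsBdd n (σ i)) : VarsBdd n (subst E σ) := by
  intro γ j hj
  obtain ⟨γ₁, i, δ, -, hv, hj⟩ := exists_var_of_subst_eq_var hj
  exact hσ γ₁ i hv δ j hj

variable {σ : ℕ → Tm N}

lemma isSome_subst_append_singleton (h : TmWF ar E)
    (hσ : ∀ γ i, E γ = some (Sum.inr i) → TmWF ar (σ i)) {γ : List ℕ} (k : ℕ)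
    (hγ : ∀ γ₁ i δ, γ = γ₁ ++ δ → E γ₁ ≠ some (Sum.inr i)) :
    (subst E σ (γ ++ [k])).isSome = (E (γ ++ [k])).isSome := by
  by_cases hvar : ∃ i, E (γ ++ [k]) = some (Sum.inr i)
  · obtain ⟨i, hi⟩ := hvar
    rw [subst_of_var h hi, hi]
    simpa using (hσ _ i hi).1
  · rw [subst_of_not_below_var σ]
    intro γ₁ i δ hγk hv
    obtain rfl | ⟨δ', k', rfl⟩ := δ.eq_nil_or_concat
    · exact hvar ⟨i, by simpa [hγk] using hv⟩
    · rw [List.concat_eq_append, ← List.append_assoc] at hγk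
      exact hγ γ₁ i δ' (List.append_inj' hγk rfl).1 hv

lemma TmWF.subst (h : TmWF ar E) (hσ : ∀ γ i, E γ = some (Sum.inr i) → TmWF ar (σ i)) :
    TmWF ar (subst E σ) := by
  constructor
  · by_cases hvar : ∃ i, E [] = some (Sum.inr i)
    · obtain ⟨i, hi⟩ := hvar
      rw [subst_of_var h hi]
      exact (hσ [] i hi).1
    · rw [subst_of_not_below_var σ]
      · exact h.1
      · intro γ₁ i δ hγ hv
        exact hvar ⟨i, (List.append_eq_nil_iff.1 hγ.symm).1 ▸ hv⟩
  · intro γ k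
    by_cases hbelow : ∃ γ₁ i δ, γ = γ₁ ++ δ ∧ E γ₁ = some (Sum.inr i)
    · obtain ⟨γ₁, i, δ, rfl, hv⟩ := hbelow
      rw [List.append_assoc, subst_append_of_var h hv, subst_append_of_var h hv]
      exact (hσ γ₁ i hv).2 δ k
    · push Not at hbelow
      rw [isSome_subst_append_singleton h hσ k hbelow, subst_of_not_below_var σ hbelow]
      exact h.2 γ k

lemma subAt_subst (h : TmWF ar E) {X : N} (hX : E [] = some (Sum.inl X)) (i : ℕ) :
    subAt (subst E σ) [i] = subst (subAt E [i]) σ := by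
  funext δ
  change subst E σ ([i] ++ δ) = subst (subAt E [i]) σ δ
  by_cases hbelow : ∃ γ j δ₂, δ = γ ++ δ₂ ∧ E (i :: γ) = some (Sum.inr j)
  · obtain ⟨γ, j, δ₂, rfl, hv⟩ := hbelow
    have hwf : TmWF ar (subAt E [i]) :=
      h.subAt_of_isSome (h.isSome_of_append (γ := [i]) γ (by simp [hv]))
    change subst E σ ((i :: γ) ++ δ₂) = _
    rw [subst_append_of_var h hv, subst_append_of_var (E := subAt E [i]) hwf hv]
  · push Not at hbelow
    rw [subst_of_not_below_var (E := subAt E [i]) σ hbelow, subst_of_not_below_var σ]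
    · rfl
    rintro (_ | ⟨i', γ⟩) j δ₂ hγ hv
    · rw [hX] at hv
      cases hv
    · obtain ⟨rfl, rfl⟩ := List.cons_eq_cons.1 hγ
      exact hbelow γ j δ₂ rfl hv

lemma subst_subst (h : TmWF ar E) (τ : ℕ → Tm N)
    (hτ : ∀ γ i, E γ = some (Sum.inr i) → TmWF ar (τ i)) :
    subst (subst E τ) σ = subst E (fun i => subst (τ i) σ) := by
  have hEτ : TmWF ar (subst E τ) := h.subst hτ
  funext γ
  by_cases hbelow : ∃ γ₁ i δ, γ = γ₁ ++ δ ∧ E γ₁ = some (Sum.inr i)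
  · obtain ⟨γ₁, i, δ, rfl, hv⟩ := hbelow
    rw [subst_append_of_var h hv]
    by_cases hbelow' : ∃ δ₁ j δ₂, δ = δ₁ ++ δ₂ ∧ τ i δ₁ = some (Sum.inr j)
    · obtain ⟨δ₁, j, δ₂, rfl, hvj⟩ := hbelow'
      have hEτv : subst E τ (γ₁ ++ δ₁) = some (Sum.inr j) := by
        rw [subst_append_of_var h hv, hvj]
      rw [← List.append_assoc, subst_append_of_var hEτ hEτv,
        subst_append_of_var (hτ γ₁ i hv) hvj]
    · push Not at hbelow'
      rw [subst_of_not_below_var σ hbelow', subst_of_not_below_var σ,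
        subst_append_of_var h hv]
      intro α j β hγ hvj
      obtain ⟨γ₁', i', δ', rfl, hvi', hvj'⟩ := exists_var_of_subst_eq_var hvj
      rw [List.append_assoc] at hγ
      obtain rfl := h.var_pos_unique hγ.symm hvi' hv
      rw [hv] at hvi'
      cases hvi'
      exact hbelow' δ' j β (List.append_cancel_left hγ) hvj'
  · push Not at hbelow
    rw [subst_of_not_below_var _ hbelow, subst_of_not_below_var σ,
      subst_of_not_below_var τ hbelow]
    intro α j β hγ hvj
    obtain ⟨γ₁, i, δ, rfl, hvi, -⟩ := exists_var_of_subst_eq_var hvj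
    exact hbelow γ₁ i (δ ++ β) (by rw [hγ, List.append_assoc]) hvi

end Terms

section Grammar

variable {N : Type*} {G : FOG N A} {a : A} {F F' : Tm N}

lemma gstep_iff (t : Tm N) :
    gstep G a F t ↔ ∃ X Er, (X, a, Er) ∈ G.rules ∧ F [] = some (Sum.inl X) ∧
      t = subst Er (fun i => subAt F [i]) := by
  constructor
  · rintro ⟨X, Er, Gs, hrule, rfl, rfl⟩
    exact ⟨X, Er, hrule, rfl, rfl⟩
  · rintro ⟨X, Er, hrule, hX, rfl⟩
    refine ⟨X, Er, _, hrule, ?_, rfl⟩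
    funext γ
    cases γ with
    | nil => exact hX
    | cons i δ => rfl

lemma gstep.varsBdd {n : ℕ} (hs : gstep G a F F') (hF : VarsBdd n F) : VarsBdd n F' := by
  obtain ⟨X, Er, -, -, rfl⟩ := (gstep_iff F').1 hs
  exact VarsBdd.subst fun _ i _ δ j hj => hF ([i] ++ δ) j hj

lemma gstep.wf (hs : gstep G a F F') (hF : TmWF G.arity F) : TmWF G.arity F' := by
  obtain ⟨X, Er, hrule, hX, rfl⟩ := (gstep_iff F').1 hs
  obtain ⟨-, hEr, hvars⟩ := G.rules_wf _ hrule
  exact hEr.subst fun γ i hv => hF.subAt_child hX (hvars γ i hv).1 (hvars γ i hv).2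

/-- Firing a rule at the root commutes with substitution below the root. -/
lemma subst_rhs_subst {X : N} {Er : Tm N} (hF : TmWF G.arity F)
    (hX : F [] = some (Sum.inl X)) (hrule : (X, a, Er) ∈ G.rules) (σ : ℕ → Tm N) :
    subst (subst Er (fun i => subAt F [i])) σ = subst Er (fun i => subAt (subst F σ) [i]) := by
  obtain ⟨-, hEr, hvars⟩ : TmFinite Er ∧ TmWF G.arity Er ∧ VarsBdd (G.arity X) Er :=
    G.rules_wf _ hrule
  rw [subst_subst hEr _ fun γ i hv => hF.subAt_child hX (hvars γ i hv).1 (hvars γ i hv).2]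
  simp_rw [subAt_subst hF hX]

lemma gstep_subst_iff (hF : TmWF G.arity F) {X : N} (hX : F [] = some (Sum.inl X))
    (σ : ℕ → Tm N) (t : Tm N) :
    gstep G a (subst F σ) t ↔ ∃ F', gstep G a F F' ∧ t = subst F' σ := by
  constructor
  · intro hs
    obtain ⟨Y, Er, hrule, hY, rfl⟩ := (gstep_iff t).1 hs
    rw [subst_root σ hX] at hY
    cases hY
    exact ⟨_, (gstep_iff _).2 ⟨X, Er, hrule, hX, rfl⟩, (subst_rhs_subst hF hX hrule σ).symm⟩
  · rintro ⟨F', hs, rfl⟩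
    obtain ⟨Y, Er, hrule, hY, rfl⟩ := (gstep_iff F').1 hs
    exact (gstep_iff _).2 ⟨Y, Er, hrule, subst_root σ hY, subst_rhs_subst hF hY hrule σ⟩

lemma traces_subst_subset (hF : TmWF G.arity F)
    (hroot : ∀ u F' i, Steps (gstep G) u F F' → F' [] ≠ some (Sum.inr i))
    (σ σ' : ℕ → Tm N) : traces (gstep G) (subst F σ) ⊆ traces (gstep G) (subst F σ') := by
  rintro w ⟨t, ht⟩
  induction w generalizing F t with
  | nil => exact ⟨_, rfl⟩
  | cons a w ih =>
    obtain ⟨s, hs, hrest⟩ := ht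
    obtain ⟨X, hX⟩ := hF.exists_root_inl (hroot [] F · rfl)
    obtain ⟨F', hstep, rfl⟩ := (gstep_subst_iff hF hX σ s).1 hs
    obtain ⟨t', ht'⟩ := ih (hstep.wf hF)
      (fun u F'' i hu => hroot (a :: u) F'' i ⟨F', hstep, hu⟩) t hrest
    exact ⟨t', _, (gstep_subst_iff hF hX σ' _).2 ⟨F', hstep, rfl⟩, ht'⟩

end Grammar

theorem sim_subst_of_no_expose_general {N A : Type*} (G : FOG N A)
    (E : Tm N) (hEwf : TmWF G.arity E) (hEvars : VarsBdd 1 E)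
    (hnoexp : ¬ ∃ u : List A, Steps (gstep G) u E (varTm N 1)) :
    ∀ T T' : Tm N,
      TmGround T → TmRegular T → TmWF G.arity T →
      TmGround T' → TmRegular T' → TmWF G.arity T' →
      Sim (gstep G) (subst E (fun j => if j = 1 then T else varTm N j))
        (subst E (fun j => if j = 1 then T' else varTm N j)) := by
  intro T T' _ _ _ _ _ _
  have hroot : ∀ u F i, Steps (gstep G) u E F → F [] ≠ some (Sum.inr i) := by
    intro u F i hu hi
    obtain ⟨hFwf, hFvars⟩ := hu.preserves (P := fun F => TmWF G.arity F ∧ VarsBdd 1 F)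
      (fun _ _ _ hs hF => ⟨hs.wf hF.1, hs.varsBdd hF.2⟩) ⟨hEwf, hEvars⟩
    obtain rfl : i = 1 := by have := hFvars [] i hi; omega
    exact hnoexp ⟨u, hFwf.eq_varTm hi ▸ hu⟩
  exact (traces_subst_subset hEwf hroot _ _).antisymm (traces_subst_subset hEwf hroot _ _)

/-- if no word `u` satisfies `E →ᵘ x₁` then `E(T) ∼ E(T')` for all
ground regular terms `T, T'`. -/
theorem sim_subst_of_no_expose {N A : Type*} [Fintype N] [Fintype A] (G : FOG N A)
    (E : Tm N) (hEreg : TmRegular E) (hEwf : TmWF G.arity E) (hEvars : VarsBdd 1 E)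
    (hnoexp : ¬ ∃ u : List A, Steps (gstep G) u E (varTm N 1)) :
    ∀ T T' : Tm N,
      TmGround T → TmRegular T → TmWF G.arity T →
      TmGround T' → TmRegular T' → TmWF G.arity T' →
      Sim (gstep G) (subst E (fun j => if j = 1 then T else varTm N j))
        (subst E (fun j => if j = 1 then T' else varTm N j)) :=
  sim_subst_of_no_expose_general G E hEwf hEvars hnoexp

end FOGPaper
end
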